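/- arXiv:2105.02380 — 2 statements merged into one kernel-verified Lean document; each statement's English description precedes it below -/
import Mathlib

section
/- For f(u,μ) = -μu + u³, v₁ = s·cos φ, v₂ = s·sin φ with s > 0 and 0 < φ < π/2, the pair (v₁,v₂) solves the reduced all-to-all system d(N-k)(v₂-v₁)+f(v₁,μ)=0, dk(v₁-v₂)+f(v₂,μ)=0 with v₁ ≠ v₂ if and only if d = s²(cos φ + sin φ)cos φ sin φ / (k cos φ + (N-k) sin φ) and μ = s²(k cos³φ + (N-k) sin³φ)/(k cos φ + (N-k) sin φ), provided φ ≠ π/4. -/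
open Real

/-!
Write `v₁ = s x`, `v₂ = s y` with `x = cos φ`, `y = sin φ`. The combination
`y·(first) − x·(second)` of the two equations factors as
`s (y − x) (d (k x + (N − k) y) − s² x y (x + y))`, and `k·(first) + (N − k)·(second)`
eliminates `d`, leaving `s (s² (k x³ + (N − k) y³) − μ (k x + (N − k) y))`. For `φ ≠ π/4` we have
`x ≠ y`, and `k x + (N − k) y > 0`, so both factors can be cancelled; the converse is a direct check.
-/

theorem reduced_system_scaled_iff {K : Type*} [Field K] {a b d μ s x y : K} (hs : s ≠ 0)
    (hxy : x ≠ y) (hD : b * x + a * y ≠ 0) :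
    (d * a * (s * y - s * x) + (-μ * (s * x) + (s * x) ^ 3) = 0 ∧
      d * b * (s * x - s * y) + (-μ * (s * y) + (s * y) ^ 3) = 0) ↔
    (d = s ^ 2 * (x + y) * x * y / (b * x + a * y) ∧
      μ = s ^ 2 * (b * x ^ 3 + a * y ^ 3) / (b * x + a * y)) := by
  constructor
  · rintro ⟨h₁, h₂⟩
    rw [eq_div_iff hD, eq_div_iff hD]
    constructor
    · apply mul_left_cancel₀ (mul_ne_zero hs (sub_ne_zero.mpr hxy.symm))
      linear_combination y * h₁ - x * h₂
    · apply mul_left_cancel₀ hs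
      linear_combination -b * h₁ - a * h₂
  · rintro ⟨hd, hμ⟩
    rw [eq_div_iff hD] at hd hμ
    constructor <;> apply mul_left_cancel₀ hD
    · linear_combination a * s * (y - x) * hd - s * x * hμ
    · linear_combination b * s * (x - y) * hd - s * y * hμ

theorem cos_ne_sin_of_ne_pi_div_four {φ : ℝ} (hφ₀ : -(π / 2) < φ) (hφ₁ : φ < π / 2)
    (hφ : φ ≠ π / 4) : cos φ ≠ sin φ := by
  intro h
  have hcos : cos φ ≠ 0 := (cos_pos_of_mem_Ioo ⟨hφ₀, hφ₁⟩).ne'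
  have htan : tan φ = tan (π / 4) := by
    rw [tan_pi_div_four, tan_eq_sin_div_cos, ← h, div_self hcos]
  exact hφ (injOn_tan ⟨hφ₀, hφ₁⟩ ⟨by linarith [pi_pos], by linarith [pi_pos]⟩ htan)

theorem all_to_all_polar_solutions_general (N k : ℕ) (hk1 : 1 ≤ k) (hk2 : k ≤ N / 2)
    (d μ s φ : ℝ) (hs : 0 < s) (hφ0 : 0 < φ) (hφ1 : φ < π / 2) (hφ4 : φ ≠ π / 4) :
    (d * ((N : ℝ) - k) * (s * sin φ - s * cos φ)
        + (-μ * (s * cos φ) + (s * cos φ) ^ 3) = 0 ∧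
      d * (k : ℝ) * (s * cos φ - s * sin φ)
        + (-μ * (s * sin φ) + (s * sin φ) ^ 3) = 0 ∧
      s * cos φ ≠ s * sin φ) ↔
    (d = s ^ 2 * (cos φ + sin φ) * cos φ * sin φ / ((k : ℝ) * cos φ + ((N : ℝ) - k) * sin φ) ∧
      μ = s ^ 2 * ((k : ℝ) * cos φ ^ 3 + ((N : ℝ) - k) * sin φ ^ 3)
            / ((k : ℝ) * cos φ + ((N : ℝ) - k) * sin φ)) := by
  have hcos : 0 < cos φ := cos_pos_of_mem_Ioo ⟨by linarith [pi_pos], hφ1⟩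
  have hsin : 0 < sin φ := sin_pos_of_pos_of_lt_pi hφ0 (by linarith [pi_pos])
  have hcs : cos φ ≠ sin φ := cos_ne_sin_of_ne_pi_div_four (by linarith [pi_pos]) hφ1 hφ4
  have hk : (1 : ℝ) ≤ k := by exact_mod_cast hk1
  have hkN : (k : ℝ) ≤ N := by exact_mod_cast hk2.trans (Nat.div_le_self N 2)
  have hD : 0 < (k : ℝ) * cos φ + ((N : ℝ) - k) * sin φ := by
    nlinarith [mul_nonneg (sub_nonneg.mpr hkN) hsin.le]
  rw [← and_assoc, and_iff_left ((mul_right_injective₀ hs.ne').ne hcs)]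
  exact reduced_system_scaled_iff hs.ne' hcs hD.ne'

/-- In polar coordinates `v₁ = s cos φ`, `v₂ = s sin φ` with `s > 0`, `0 < φ < π/2`,
`φ ≠ π/4`, the reduced all-to-all system with `f(u,μ) = -μu + u³` is solved with
`v₁ ≠ v₂` if and only if `d` and `μ` are given by the explicit blow-up formulas. -/
theorem all_to_all_polar_solutions (N k : ℕ) (hN : 2 ≤ N) (hk1 : 1 ≤ k) (hk2 : k ≤ N / 2)
    (d μ s φ : ℝ) (hs : 0 < s) (hφ0 : 0 < φ) (hφ1 : φ < π / 2) (hφ4 : φ ≠ π / 4) :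
    (d * ((N : ℝ) - k) * (s * sin φ - s * cos φ)
        + (-μ * (s * cos φ) + (s * cos φ) ^ 3) = 0 ∧
      d * (k : ℝ) * (s * cos φ - s * sin φ)
        + (-μ * (s * sin φ) + (s * sin φ) ^ 3) = 0 ∧
      s * cos φ ≠ s * sin φ) ↔
    (d = s ^ 2 * (cos φ + sin φ) * cos φ * sin φ / ((k : ℝ) * cos φ + ((N : ℝ) - k) * sin φ) ∧
      μ = s ^ 2 * ((k : ℝ) * cos φ ^ 3 + ((N : ℝ) - k) * sin φ ^ 3)
            / ((k : ℝ) * cos φ + ((N : ℝ) - k) * sin φ)) :=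
  all_to_all_polar_solutions_general N k hk1 hk2 d μ s φ hs hφ0 hφ1 hφ4
end

section
/- For f(u,μ) = μ̌ - ǔ² in shifted coordinates u = 1 + ǔ, μ = 1 - μ̌ (leading-order normal form at the fold), the reduced all-to-all system d(N-k)(ǔ₂-ǔ₁) + μ̌ - ǔ₁² = 0, dk(ǔ₁-ǔ₂) + μ̌ - ǔ₂² = 0 with ǔ₁ ≠ ǔ₂ implies ǔ₂ = -Nd - ǔ₁ and μ̌ = ǔ₁² + (N-k)d(2ǔ₁ + Nd); consequently, for fixed d, μ̌ as a function of ǔ₁ has a unique minimum at ǔ₁ = -(N-k)d with minimum value μ̌ = k(N-k)d². -/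
/-- In the leading-order normal form at the fold near `(u,μ) = (1,1)`, the reduced
all-to-all system with `ǔ₁ ≠ ǔ₂` implies `ǔ₂ = -Nd - ǔ₁` and
`mucheck = ǔ₁² + (N-k)d(2ǔ₁ + Nd)`; moreover this `μ̌`, as a function of `ǔ₁`, has a unique
minimum at `ǔ₁ = -(N-k)d` with value `k(N-k)d²`. -/
theorem fold_leading_order (N k : ℕ) (hN : 2 ≤ N) (hk1 : 1 ≤ k) (hk2 : k ≤ N / 2)
    (d : ℝ) :
    (∀ u₁ u₂ mucheck : ℝ, u₁ ≠ u₂ →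
      d * ((N : ℝ) - k) * (u₂ - u₁) + mucheck - u₁ ^ 2 = 0 →
      d * (k : ℝ) * (u₁ - u₂) + mucheck - u₂ ^ 2 = 0 →
      u₂ = -(N : ℝ) * d - u₁ ∧ mucheck = u₁ ^ 2 + ((N : ℝ) - k) * d * (2 * u₁ + N * d)) ∧
    (∀ u₁ : ℝ, (k : ℝ) * ((N : ℝ) - k) * d ^ 2
        ≤ u₁ ^ 2 + ((N : ℝ) - k) * d * (2 * u₁ + N * d) ∧
      (u₁ ^ 2 + ((N : ℝ) - k) * d * (2 * u₁ + N * d) = (k : ℝ) * ((N : ℝ) - k) * d ^ 2 ↔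
        u₁ = -((N : ℝ) - k) * d)) := by
  constructor
  · intro u₁ u₂ mucheck hne h1 h2
    have hsum : u₁ + u₂ = -(N : ℝ) * d := by
      have hd : (u₂ - u₁) * (d * N + u₁ + u₂) = 0 := by nlinarith [h1, h2]
      have hne' : u₂ - u₁ ≠ 0 := sub_ne_zero.mpr (Ne.symm hne)
      have := (mul_eq_zero.mp hd).resolve_left hne'
      linarith
    have hu2 : u₂ = -(N : ℝ) * d - u₁ := by linarith
    refine ⟨hu2, ?_⟩
    subst hu2
    nlinarith [h1]
  · intro u₁
    have key : u₁ ^ 2 + ((N : ℝ) - k) * d * (2 * u₁ + N * d)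
        - (k : ℝ) * ((N : ℝ) - k) * d ^ 2 = (u₁ + ((N : ℝ) - k) * d) ^ 2 := by ring
    constructor
    · nlinarith [sq_nonneg (u₁ + ((N : ℝ) - k) * d)]
    · constructor
      · intro h
        have : (u₁ + ((N : ℝ) - k) * d) ^ 2 = 0 := by linarith [key]
        have := pow_eq_zero_iff (n := 2) (by norm_num) |>.mp this
        linarith
      · intro h; subst h; ring
end
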